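/- Let A, B be positive definite n×n complex matrices and let x ∈ ℂⁿ be a nonzero vector. Then the function f(t) = ⟨(A ♯_t B)x, x⟩ is log-convex on [0,1]; that is, for all s, t ∈ [0,1] and λ ∈ [0,1], f(λs + (1−λ)t) ≤ f(s)^λ · f(t)^{1−λ}. -/

import Mathlib

open Matrix ComplexOrder

/-- Real power of a (Hermitian) matrix via the continuous functional calculus. -/
noncomputable def mrpow {n : ℕ} (A : Matrix (Fin n) (Fin n) ℂ) (t : ℝ) :
    Matrix (Fin n) (Fin n) ℂ :=
  cfc (fun x : ℝ => x ^ t) A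

/-- The weighted geometric mean `A ♯_t B = A^{1/2} (A^{-1/2} B A^{-1/2})^t A^{1/2}`. -/
noncomputable def geomMean {n : ℕ} (A B : Matrix (Fin n) (Fin n) ℂ) (t : ℝ) :
    Matrix (Fin n) (Fin n) ℂ :=
  mrpow A (1 / 2) * mrpow (mrpow A (-(1 / 2)) * B * mrpow A (-(1 / 2))) t * mrpow A (1 / 2)

/-! With `C = A^{-1/2} B A^{-1/2} = U diag(μ) U*` and `y = A^{1/2} x`, the quadratic form is
`⟨(A ♯_r B) x, x⟩ = ⟨C^r y, y⟩ = ∑ i |(U* y)_i|² μ_i ^ r`, a nonnegative combination of the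
exponentials `r ↦ μ_i ^ r`. Such sums are log-convex by Hölder's inequality with exponents
`1/λ` and `1/(1-λ)`. -/

namespace Real

lemma sum_mul_rpow_mul_rpow_le {ι : Type*} (s : Finset ι) {w a b : ι → ℝ}
    (hw : ∀ i ∈ s, 0 ≤ w i) (ha : ∀ i ∈ s, 0 ≤ a i) (hb : ∀ i ∈ s, 0 ≤ b i)
    {l : ℝ} (hl0 : 0 ≤ l) (hl1 : l ≤ 1) :
    ∑ i ∈ s, w i * (a i ^ l * b i ^ (1 - l)) ≤
      (∑ i ∈ s, w i * a i) ^ l * (∑ i ∈ s, w i * b i) ^ (1 - l) := by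
  rcases hl0.eq_or_lt with rfl | hl0
  · simp
  rcases hl1.eq_or_lt with rfl | hl1
  · simp
  have hl1' : 0 < 1 - l := by linarith
  have hpq : HolderConjugate (1 / l) (1 / (1 - l)) := by
    rw [one_div, one_div]; exact .inv_inv hl0 hl1' (by ring)
  have holder := inner_le_Lp_mul_Lq_of_nonneg s hpq
    (f := fun i => (w i * a i) ^ l) (g := fun i => (w i * b i) ^ (1 - l))
    (fun i hi => rpow_nonneg (mul_nonneg (hw i hi) (ha i hi)) _)
    (fun i hi => rpow_nonneg (mul_nonneg (hw i hi) (hb i hi)) _)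
  have split : ∀ i ∈ s,
      (w i * a i) ^ l * (w i * b i) ^ (1 - l) = w i * (a i ^ l * b i ^ (1 - l)) := by
    intro i hi
    have hwi : w i ^ l * w i ^ (1 - l) = w i := by
      rw [← rpow_add' (hw i hi) (by norm_num), add_sub_cancel, rpow_one]
    rw [mul_rpow (hw i hi) (ha i hi), mul_rpow (hw i hi) (hb i hi), mul_mul_mul_comm, hwi]
  have unpow : ∀ {c : ι → ℝ}, (∀ i ∈ s, 0 ≤ c i) → ∀ {r : ℝ}, r ≠ 0 →
      ∑ i ∈ s, ((w i * c i) ^ r) ^ (1 / r) = ∑ i ∈ s, w i * c i := fun hc r hr =>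
    Finset.sum_congr rfl fun i hi => by
      rw [← rpow_mul (mul_nonneg (hw i hi) (hc i hi)), mul_one_div_cancel hr, rpow_one]
  simp only [one_div_one_div, unpow ha hl0.ne', unpow hb hl1'.ne'] at holder
  rwa [Finset.sum_congr rfl split] at holder

lemma sum_mul_rpow_convex_comb_le {ι : Type*} (s : Finset ι) {w μ : ι → ℝ}
    (hw : ∀ i ∈ s, 0 ≤ w i) (hμ : ∀ i ∈ s, 0 < μ i) (p q : ℝ) {l : ℝ} (hl0 : 0 ≤ l)
    (hl1 : l ≤ 1) :
    ∑ i ∈ s, w i * μ i ^ (l * p + (1 - l) * q) ≤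
      (∑ i ∈ s, w i * μ i ^ p) ^ l * (∑ i ∈ s, w i * μ i ^ q) ^ (1 - l) := by
  have split : ∀ i ∈ s, μ i ^ (l * p + (1 - l) * q) = (μ i ^ p) ^ l * (μ i ^ q) ^ (1 - l) := by
    intro i hi
    rw [rpow_add (hμ i hi), ← rpow_mul (hμ i hi).le, ← rpow_mul (hμ i hi).le, mul_comm l,
      mul_comm (1 - l)]
  rw [Finset.sum_congr rfl fun i hi => by rw [split i hi]]
  exact sum_mul_rpow_mul_rpow_le s hw (fun i hi => (rpow_pos_of_pos (hμ i hi) _).le)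
    (fun i hi => (rpow_pos_of_pos (hμ i hi) _).le) hl0 hl1

end Real

namespace Matrix

variable {ι : Type*} [Fintype ι]

lemma IsHermitian.re_dotProduct_cfc_mulVec [DecidableEq ι] {C : Matrix ι ι ℂ} (hC : C.IsHermitian)
    (f : ℝ → ℝ) (y : ι → ℂ) :
    (star y ⬝ᵥ (cfc f C *ᵥ y)).re =
      ∑ i, Complex.normSq ((star (hC.eigenvectorUnitary : Matrix ι ι ℂ) *ᵥ y) i) *
        f (hC.eigenvalues i) := by
  let U := (hC.eigenvectorUnitary : Matrix ι ι ℂ)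
  have hz : star (star U *ᵥ y) = star y ᵥ* U := by
    rw [star_mulVec, star_eq_conjTranspose U, conjTranspose_conjTranspose]
  rw [hC.cfc_eq, IsHermitian.cfc, Unitary.conjStarAlgAut_apply, ← mulVec_mulVec,
    ← mulVec_mulVec, dotProduct_mulVec (star y) U, ← hz, dotProduct, Complex.re_sum]
  refine Finset.sum_congr rfl fun i _ => ?_
  rw [mulVec_diagonal, Pi.star_apply, Complex.star_def, mul_left_comm,
    ← Complex.normSq_eq_conj_mul_self]
  simp [U, mul_comm]

lemma dotProduct_mul_mul_mulVec_of_isHermitian {S : Matrix ι ι ℂ} (hS : S.IsHermitian)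
    (M : Matrix ι ι ℂ) (x : ι → ℂ) :
    star x ⬝ᵥ ((S * M * S) *ᵥ x) = star (S *ᵥ x) ⬝ᵥ (M *ᵥ (S *ᵥ x)) := by
  rw [← mulVec_mulVec, ← mulVec_mulVec, dotProduct_mulVec (star x) S, star_mulVec, hS.eq]

end Matrix

open scoped MatrixOrder in
lemma posDef_mrpow {n : ℕ} {A : Matrix (Fin n) (Fin n) ℂ} (hA : A.PosDef) (r : ℝ) :
    (mrpow A r).PosDef := by
  have spectrum_pos := fun x (hx : x ∈ spectrum ℝ A) => hA.isStrictlyPositive.spectrum_pos hx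
  have hcont : ContinuousOn (fun x : ℝ => x ^ r) (spectrum ℝ A) := fun x hx =>
    (Real.continuousAt_rpow_const x r (.inl (spectrum_pos x hx).ne')).continuousWithinAt
  rw [← isStrictlyPositive_iff_posDef, mrpow,
    cfc_isStrictlyPositive_iff _ A hcont hA.1.isSelfAdjoint]
  exact fun x hx => Real.rpow_pos_of_pos (spectrum_pos x hx) r

lemma Matrix.PosDef.exists_re_dotProduct_geomMean_mulVec_eq_sum {n : ℕ}
    {A B : Matrix (Fin n) (Fin n) ℂ} (hA : A.PosDef) (hB : B.PosDef) (x : Fin n → ℂ) :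
    ∃ μ w : Fin n → ℝ, (∀ i, 0 < μ i) ∧ (∀ i, 0 ≤ w i) ∧
      ∀ r, (star x ⬝ᵥ (geomMean A B r *ᵥ x)).re = ∑ i, w i * μ i ^ r := by
  have hS := posDef_mrpow hA (-(1 / 2))
  have hC : (mrpow A (-(1 / 2)) * B * mrpow A (-(1 / 2))).PosDef := by
    have := hB.conjTranspose_mul_mul_same (mulVec_injective_iff_isUnit.mpr hS.isUnit)
    rwa [hS.1.eq] at this
  refine ⟨hC.1.eigenvalues,
    fun i => Complex.normSq ((star (hC.1.eigenvectorUnitary : Matrix _ _ ℂ) *ᵥ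
      (mrpow A (1 / 2) *ᵥ x)) i),
    hC.eigenvalues_pos, fun i => Complex.normSq_nonneg _, fun r => ?_⟩
  rw [geomMean, dotProduct_mul_mul_mulVec_of_isHermitian (posDef_mrpow hA _).1]
  exact hC.1.re_dotProduct_cfc_mulVec _ _

theorem stmt2 (n : ℕ) (A B : Matrix (Fin n) (Fin n) ℂ) (hA : A.PosDef) (hB : B.PosDef)
    (x : Fin n → ℂ) (s t l : ℝ)
    (hl : l ∈ Set.Icc (0 : ℝ) 1) :
    (star x ⬝ᵥ (geomMean A B (l * s + (1 - l) * t) *ᵥ x)).re ≤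
      (star x ⬝ᵥ (geomMean A B s *ᵥ x)).re ^ l *
        (star x ⬝ᵥ (geomMean A B t *ᵥ x)).re ^ (1 - l) := by
  obtain ⟨μ, w, hμ, hw, hf⟩ := hA.exists_re_dotProduct_geomMean_mulVec_eq_sum hB x
  simp only [hf]
  exact Real.sum_mul_rpow_convex_comb_le _ (fun i _ => hw i) (fun i _ => hμ i) s t hl.1 hl.2
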